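/- Let M₀, M₁ be 2×2 complex positive semidefinite matrices with M₀ + M₁ = 𝟙, and let A be a 2×2 Hermitian matrix with tr A = 0. Then λ_max(√M₀·A·√M₀) + λ_max(√M₁·A·√M₁) ≤ ‖A‖, where λ_max denotes the largest eigenvalue of a Hermitian matrix and ‖A‖ is the operator norm of A (equal to |a⃗| when A = a⃗·σ⃗). -/

import Mathlib

/-!
Let `(a, u)` be the top eigenpair of `A`. Being traceless, `A` has `-a ≤ 0` as its other
eigenvalue, so `⟪x, A x⟫ ≤ a ‖⟪u, x⟫‖²` for every `x`. For a unit vector `v`, Cauchy–Schwarz then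
gives `⟪v, √M A √M v⟫ ≤ a ‖⟪√M u, v⟫‖² ≤ a ⟪u, M u⟫`, so `λ_max(√M_b A √M_b) ≤ a ⟪u, M_b u⟫`.
Summing over `b` and using `M₀ + M₁ = 1` bounds the sum by `a ≤ ‖A‖`.
-/

open Matrix ComplexOrder

noncomputable section

/-- The positive semidefinite square root of a positive semidefinite matrix
(the definition `Matrix.PosSemidef.sqrt` of the older Mathlib, since removed). -/
def Matrix.PosSemidef.sqrt {n 𝕜 : Type*} [Fintype n] [DecidableEq n] [RCLike 𝕜]
    {A : Matrix n n 𝕜} (hA : A.PosSemidef) : Matrix n n 𝕜 :=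
  hA.1.eigenvectorUnitary.1 * diagonal ((↑) ∘ (√·) ∘ hA.1.eigenvalues) *
    (star hA.1.eigenvectorUnitary : Matrix n n 𝕜)

open RCLike InnerProductSpace

section InnerProduct

variable {ι 𝕜 E F : Type*} [Fintype ι] [RCLike 𝕜] [NormedAddCommGroup E] [InnerProductSpace 𝕜 E]
  [FunLike F E E] [LinearMapClass F 𝕜 E E]

theorem OrthonormalBasis.re_inner_map_self_eq_sum (b : OrthonormalBasis ι 𝕜 E)
    {T : F} {μ : ι → ℝ} (hT : ∀ i, T (b i) = (μ i : 𝕜) • b i) (x : E) :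
    re ⟪x, T x⟫_𝕜 = ∑ i, μ i * ‖⟪b i, x⟫_𝕜‖ ^ 2 := by
  have hTx : T x = ∑ i, (μ i * ⟪b i, x⟫_𝕜) • b i := by
    conv_lhs => rw [← b.sum_repr' x]
    simp only [map_sum, map_smul, hT, smul_smul, mul_comm]
  rw [hTx, inner_sum, map_sum]
  refine Finset.sum_congr rfl fun i _ => ?_
  rw [inner_smul_right, ← inner_conj_symm x (b i), mul_assoc, RCLike.mul_conj, ← ofReal_pow,
    ← ofReal_mul, ofReal_re]

theorem OrthonormalBasis.re_inner_map_self_le [DecidableEq ι] (b : OrthonormalBasis ι 𝕜 E)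
    {T : F} {μ : ι → ℝ} (hT : ∀ i, T (b i) = (μ i : 𝕜) • b i) {k : ι} (hμ : ∀ j ≠ k, μ j ≤ 0)
    (x : E) :
    re ⟪x, T x⟫_𝕜 ≤ μ k * ‖⟪b k, x⟫_𝕜‖ ^ 2 := by
  rw [b.re_inner_map_self_eq_sum hT, Fintype.sum_eq_add_sum_compl k, add_le_iff_nonpos_right]
  refine Finset.sum_nonpos fun j hj => mul_nonpos_of_nonpos_of_nonneg ?_ (sq_nonneg _)
  exact hμ j (Finset.mem_compl.mp hj ∘ Finset.mem_singleton.mpr)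

end InnerProduct

namespace Matrix

variable {𝕜 n : Type*} [RCLike 𝕜] [Fintype n] [DecidableEq n]

theorem IsHermitian.toEuclideanCLM_eigenvectorBasis {A : Matrix n n 𝕜} (hA : A.IsHermitian)
    (j : n) :
    toEuclideanCLM (𝕜 := 𝕜) A (hA.eigenvectorBasis j) =
      (hA.eigenvalues j : 𝕜) • hA.eigenvectorBasis j := by
  apply WithLp.ofLp_injective
  rw [ofLp_toEuclideanCLM, hA.mulVec_eigenvectorBasis, WithLp.ofLp_smul,
    RCLike.real_smul_eq_coe_smul (K := 𝕜)]

theorem IsHermitian.eigenvalues_le_of_forall_re_inner_le {B : Matrix n n 𝕜} (hB : B.IsHermitian)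
    {c : ℝ} (hc : ∀ v, ‖v‖ = 1 → re ⟪v, toEuclideanCLM (𝕜 := 𝕜) B v⟫_𝕜 ≤ c) (i : n) :
    hB.eigenvalues i ≤ c := by
  have hv := hc _ (hB.eigenvectorBasis.norm_eq_one i)
  rwa [hB.toEuclideanCLM_eigenvectorBasis, inner_smul_right, inner_self_eq_norm_sq_to_K,
    hB.eigenvectorBasis.norm_eq_one, ofReal_one, one_pow, mul_one, ofReal_re] at hv

theorem IsHermitian.abs_eigenvalues_le_norm_toEuclideanCLM {A : Matrix n n 𝕜}
    (hA : A.IsHermitian) (i : n) : |hA.eigenvalues i| ≤ ‖toEuclideanCLM (𝕜 := 𝕜) A‖ := by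
  have h := (toEuclideanCLM (𝕜 := 𝕜) A).le_opNorm (hA.eigenvectorBasis i)
  rwa [hA.toEuclideanCLM_eigenvectorBasis, norm_smul, hA.eigenvectorBasis.norm_eq_one, mul_one,
    mul_one, norm_ofReal] at h

theorem PosSemidef.sqrt_eq_conjStarAlgAut {A : Matrix n n 𝕜} (hA : A.PosSemidef) :
    hA.sqrt = Unitary.conjStarAlgAut 𝕜 _ hA.1.eigenvectorUnitary
      (diagonal ((↑) ∘ (√·) ∘ hA.1.eigenvalues)) :=
  rfl

theorem PosSemidef.isHermitian_sqrt {A : Matrix n n 𝕜} (hA : A.PosSemidef) :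
    hA.sqrt.IsHermitian := by
  rw [hA.sqrt_eq_conjStarAlgAut]
  refine IsSelfAdjoint.map (isHermitian_diagonal_of_self_adjoint _ ?_).isSelfAdjoint _
  ext i
  simp

theorem PosSemidef.sqrt_mul_sqrt {A : Matrix n n 𝕜} (hA : A.PosSemidef) :
    hA.sqrt * hA.sqrt = A := by
  conv_rhs => rw [hA.1.spectral_theorem]
  rw [hA.sqrt_eq_conjStarAlgAut, ← map_mul, diagonal_mul_diagonal]
  congr 2
  ext i
  simp [← ofReal_mul, Real.mul_self_sqrt (hA.eigenvalues_nonneg i)]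

theorem PosSemidef.eigenvalues_sqrt_mul_mul_sqrt_le {M A : Matrix n n 𝕜} (hM : M.PosSemidef)
    (h : (hM.sqrt * A * hM.sqrt).IsHermitian) {a : ℝ} (ha : 0 ≤ a) {u : EuclideanSpace 𝕜 n}
    (hAu : ∀ x, re ⟪x, toEuclideanCLM (𝕜 := 𝕜) A x⟫_𝕜 ≤ a * ‖⟪u, x⟫_𝕜‖ ^ 2) (i : n) :
    h.eigenvalues i ≤ a * re ⟪u, toEuclideanCLM (𝕜 := 𝕜) M u⟫_𝕜 := by
  refine h.eigenvalues_le_of_forall_re_inner_le (fun v hv => ?_) i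
  set S := toEuclideanCLM (𝕜 := 𝕜) hM.sqrt
  have hS : ∀ x y, ⟪S x, y⟫_𝕜 = ⟪x, S y⟫_𝕜 :=
    (hM.isHermitian_sqrt.isSelfAdjoint.map toEuclideanCLM).isSymmetric
  have hSS : ∀ x, S (S x) = toEuclideanCLM (𝕜 := 𝕜) M x := fun x => by
    rw [← hM.sqrt_mul_sqrt, map_mul]; rfl
  calc re ⟪v, toEuclideanCLM (𝕜 := 𝕜) (hM.sqrt * A * hM.sqrt) v⟫_𝕜
      = re ⟪S v, toEuclideanCLM (𝕜 := 𝕜) A (S v)⟫_𝕜 := by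
        rw [map_mul, map_mul]
        exact congrArg re (hS v _).symm
    _ ≤ a * ‖⟪u, S v⟫_𝕜‖ ^ 2 := hAu _
    _ = a * ‖⟪S u, v⟫_𝕜‖ ^ 2 := by rw [hS]
    _ ≤ a * ‖S u‖ ^ 2 := by
        gcongr
        simpa [hv] using norm_inner_le_norm (𝕜 := 𝕜) (S u) v
    _ = a * re ⟪u, toEuclideanCLM (𝕜 := 𝕜) M u⟫_𝕜 := by
        rw [← hSS, ← inner_self_eq_norm_sq (𝕜 := 𝕜), hS]

theorem IsHermitian.exists_forall_re_inner_le_of_trace_eq_zero {A : Matrix (Fin 2) (Fin 2) 𝕜}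
    (hA : A.IsHermitian) (htr : A.trace = 0) :
    ∃ (a : ℝ) (u : EuclideanSpace 𝕜 (Fin 2)), 0 ≤ a ∧ a ≤ ‖toEuclideanCLM (𝕜 := 𝕜) A‖ ∧
      ‖u‖ = 1 ∧ ∀ x, re ⟪x, toEuclideanCLM (𝕜 := 𝕜) A x⟫_𝕜 ≤ a * ‖⟪u, x⟫_𝕜‖ ^ 2 := by
  obtain ⟨k, hk⟩ := Finite.exists_max hA.eigenvalues
  have hsum : ∑ i, hA.eigenvalues i = 0 := by
    exact_mod_cast hA.trace_eq_sum_eigenvalues.symm.trans htr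
  have hk_nonneg : 0 ≤ hA.eigenvalues k := by
    have := Finset.sum_le_card_nsmul Finset.univ hA.eigenvalues _ fun j _ => hk j
    rw [hsum, Finset.card_univ, Fintype.card_fin, nsmul_eq_mul, Nat.cast_ofNat] at this
    linarith
  have hother : ∀ j ≠ k, hA.eigenvalues j ≤ 0 := by
    intro j hj
    rw [Fin.sum_univ_two] at hsum
    fin_cases j <;> fin_cases k <;> simp_all <;> linarith
  exact ⟨hA.eigenvalues k, hA.eigenvectorBasis k, hk_nonneg,
    (le_abs_self _).trans (hA.abs_eigenvalues_le_norm_toEuclideanCLM k),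
    hA.eigenvectorBasis.norm_eq_one k,
    hA.eigenvectorBasis.re_inner_map_self_le hA.toEuclideanCLM_eigenvectorBasis hother⟩

end Matrix

theorem povm_eigenvalue_sum_bound
    (M0 M1 A : Matrix (Fin 2) (Fin 2) ℂ)
    (hM0 : M0.PosSemidef) (hM1 : M1.PosSemidef) (hsum : M0 + M1 = 1)
    (hA : A.IsHermitian) (htrA : A.trace = 0)
    (h0 : (hM0.sqrt * A * hM0.sqrt).IsHermitian)
    (h1 : (hM1.sqrt * A * hM1.sqrt).IsHermitian) :
    (⨆ i, h0.eigenvalues i) + (⨆ i, h1.eigenvalues i) ≤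
      ‖Matrix.toEuclideanCLM (𝕜 := ℂ) A‖ := by
  obtain ⟨a, u, ha, haA, hu, hAu⟩ := hA.exists_forall_re_inner_le_of_trace_eq_zero htrA
  have hMu :
      re ⟪u, toEuclideanCLM (𝕜 := ℂ) M0 u⟫_ℂ + re ⟪u, toEuclideanCLM (𝕜 := ℂ) M1 u⟫_ℂ = 1 := by
    rw [← map_add, ← inner_add_right, ← _root_.add_apply, ← map_add, hsum, map_one,
      one_apply_eq_self, inner_self_eq_norm_sq, hu, one_pow]
  calc (⨆ i, h0.eigenvalues i) + (⨆ i, h1.eigenvalues i)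
      ≤ a * re ⟪u, toEuclideanCLM (𝕜 := ℂ) M0 u⟫_ℂ +
          a * re ⟪u, toEuclideanCLM (𝕜 := ℂ) M1 u⟫_ℂ :=
        add_le_add (ciSup_le (hM0.eigenvalues_sqrt_mul_mul_sqrt_le h0 ha hAu))
          (ciSup_le (hM1.eigenvalues_sqrt_mul_mul_sqrt_le h1 ha hAu))
    _ = a := by rw [← mul_add, hMu, mul_one]
    _ ≤ _ := haA
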